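/- Let ρ be a density matrix on ℂ^{d1}⊗ℂ^{d2} (Hermitian, positive semidefinite, trace 1, indexed by Fin d1 × Fin d2) with marginals ρ_A(i,i') = ∑_k ρ((i,k),(i',k)) and ρ_B(k,k') = ∑_i ρ((i,k),(i,k')), and let H1, H2 be Hermitian positive semidefinite matrices each with smallest eigenvalue 0. If pe_{H1}(ρ_A) = 0 and pe_{H2}(ρ_B) = 0, then pe_{H1 ⊗ I + I ⊗ H2}(ρ) = 0, where pe_K(σ) := inf over unitaries U of Re(Tr(U σ U† K)). -/

import Mathlib

open Matrix ComplexOrder Kronecker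
open scoped MatrixOrder

/-- Passive-state energy of `σ` relative to `K`: the infimum over unitaries `U`
of `Re Tr(U σ U† K)`. -/
noncomputable def pe {n : Type*} [Fintype n] [DecidableEq n]
    (K σ : Matrix n n ℂ) : ℝ :=
  ⨅ U : Matrix.unitaryGroup n ℂ,
    (((U : Matrix n n ℂ) * σ * (U : Matrix n n ℂ)ᴴ * K).trace).re

lemma diag_nonneg' {n : Type*} [Fintype n] [DecidableEq n] {M : Matrix n n ℂ}
    (hM : M.PosSemidef) (i : n) : 0 ≤ M i i := by
  exact hM.diag_nonneg

lemma trace_re_nonneg' {n : Type*} [Fintype n] [DecidableEq n] {M : Matrix n n ℂ}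
    (hM : M.PosSemidef) : 0 ≤ M.trace.re := by
  rw [Matrix.trace, Complex.re_sum]
  exact Finset.sum_nonneg fun i _ => (Complex.le_def.mp (diag_nonneg' hM i)).1

lemma trace_mul_re_nonneg' {n : Type*} [Fintype n] [DecidableEq n] {M N : Matrix n n ℂ}
    (hM : M.PosSemidef) (hN : N.PosSemidef) : 0 ≤ (M * N).trace.re := by
  have h1 : (M * N).trace = ((CFC.sqrt M)ᴴ * N * CFC.sqrt M).trace := by
    conv_lhs => rw [← CFC.sqrt_mul_sqrt_self M hM.nonneg]
    rw [(CFC.sqrt_nonneg M).posSemidef.1, Matrix.mul_assoc, Matrix.trace_mul_comm,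
      Matrix.mul_assoc]
  rw [h1]
  exact trace_re_nonneg' (hN.conjTranspose_mul_mul_same _)

lemma kron_conjTranspose {m n : Type*} [Fintype m] [Fintype n]
    (A : Matrix m m ℂ) (B : Matrix n n ℂ) : (A ⊗ₖ B)ᴴ = Aᴴ ⊗ₖ Bᴴ := by
  ext ⟨i, k⟩ ⟨j, l⟩
  simp [Matrix.conjTranspose_apply, Matrix.kroneckerMap_apply, mul_comm]

lemma trace_mul_kron_one {d1 d2 : ℕ}
    (ρ : Matrix (Fin d1 × Fin d2) (Fin d1 × Fin d2) ℂ) (K : Matrix (Fin d1) (Fin d1) ℂ) :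
    (ρ * (K ⊗ₖ (1 : Matrix (Fin d2) (Fin d2) ℂ))).trace
      = ((Matrix.of fun i i' => ∑ k, ρ (i, k) (i', k)) * K).trace := by
  simp only [Matrix.trace, Matrix.diag, Matrix.mul_apply, Matrix.kroneckerMap_apply,
    Matrix.one_apply, Matrix.of_apply, Fintype.sum_prod_type, mul_ite, mul_one, mul_zero,
    Finset.sum_ite_eq', Finset.mem_univ, if_true, Finset.sum_mul]
  exact Finset.sum_congr rfl fun i _ => Finset.sum_comm

lemma trace_mul_one_kron {d1 d2 : ℕ}
    (ρ : Matrix (Fin d1 × Fin d2) (Fin d1 × Fin d2) ℂ) (K : Matrix (Fin d2) (Fin d2) ℂ) :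
    (ρ * ((1 : Matrix (Fin d1) (Fin d1) ℂ) ⊗ₖ K)).trace
      = ((Matrix.of fun k k' => ∑ i, ρ (i, k) (i, k')) * K).trace := by
  simp only [Matrix.trace, Matrix.diag, Matrix.mul_apply, Matrix.kroneckerMap_apply,
    Matrix.one_apply, Matrix.of_apply, Fintype.sum_prod_type, ite_mul, one_mul, zero_mul,
    mul_ite, mul_zero]
  conv_lhs => enter [2, x, 2, x_1]; rw [Finset.sum_comm]
  simp only [Finset.sum_ite_eq', Finset.mem_univ, if_true, Finset.sum_mul]
  rw [Finset.sum_comm]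
  exact Finset.sum_congr rfl fun _ _ => Finset.sum_comm

lemma traceConjAux {n : Type*} [Fintype n] (V σ K : Matrix n n ℂ) :
    (V * σ * Vᴴ * K).trace = (σ * (Vᴴ * K * V)).trace := by
  rw [Matrix.mul_assoc (V * σ) Vᴴ K, Matrix.trace_mul_comm,
    ← Matrix.mul_assoc (Vᴴ * K) V σ, Matrix.trace_mul_comm]

lemma kron_one_psd {d1 d2 : ℕ} {H1 : Matrix (Fin d1) (Fin d1) ℂ} (hH1 : H1.PosSemidef) :
    (H1 ⊗ₖ (1 : Matrix (Fin d2) (Fin d2) ℂ)).PosSemidef := by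
  have h : H1 ⊗ₖ (1 : Matrix (Fin d2) (Fin d2) ℂ)
      = (CFC.sqrt H1 ⊗ₖ (1 : Matrix (Fin d2) (Fin d2) ℂ))ᴴ
        * (CFC.sqrt H1 ⊗ₖ (1 : Matrix (Fin d2) (Fin d2) ℂ)) := by
    rw [kron_conjTranspose, Matrix.conjTranspose_one, ← Matrix.mul_kronecker_mul,
      Matrix.one_mul, (CFC.sqrt_nonneg H1).posSemidef.1.eq, CFC.sqrt_mul_sqrt_self H1 hH1.nonneg]
  rw [h]
  exact Matrix.posSemidef_conjTranspose_mul_self _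

lemma one_kron_psd {d1 d2 : ℕ} {H2 : Matrix (Fin d2) (Fin d2) ℂ} (hH2 : H2.PosSemidef) :
    ((1 : Matrix (Fin d1) (Fin d1) ℂ) ⊗ₖ H2).PosSemidef := by
  have h : (1 : Matrix (Fin d1) (Fin d1) ℂ) ⊗ₖ H2
      = ((1 : Matrix (Fin d1) (Fin d1) ℂ) ⊗ₖ CFC.sqrt H2)ᴴ
        * ((1 : Matrix (Fin d1) (Fin d1) ℂ) ⊗ₖ CFC.sqrt H2) := by
    rw [kron_conjTranspose, Matrix.conjTranspose_one, ← Matrix.mul_kronecker_mul,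
      Matrix.one_mul, (CFC.sqrt_nonneg H2).posSemidef.1.eq, CFC.sqrt_mul_sqrt_self H2 hH2.nonneg]
  rw [h]
  exact Matrix.posSemidef_conjTranspose_mul_self _

/-- if both marginal passive-state energies of a bipartite density
matrix vanish (for PSD local Hamiltonians with ground energy 0), then so does the
global passive-state energy for `H1 ⊗ I + I ⊗ H2` (merging property of
`k`-separable ergotropic gaps). -/
theorem stmt_17 (d1 d2 : ℕ)
    (ρ : Matrix (Fin d1 × Fin d2) (Fin d1 × Fin d2) ℂ)
    (hρ : ρ.PosSemidef) (htr : ρ.trace = 1)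
    (H1 : Matrix (Fin d1) (Fin d1) ℂ) (H2 : Matrix (Fin d2) (Fin d2) ℂ)
    (hH1 : H1.PosSemidef) (hH2 : H2.PosSemidef)
    (hmin1 : IsLeast (Set.range hH1.isHermitian.eigenvalues) 0)
    (hmin2 : IsLeast (Set.range hH2.isHermitian.eigenvalues) 0)
    (hA : pe H1 (Matrix.of fun i i' => ∑ k, ρ (i, k) (i', k)) = 0)
    (hB : pe H2 (Matrix.of fun k k' => ∑ i, ρ (i, k) (i, k')) = 0) :
    pe (H1 ⊗ₖ (1 : Matrix (Fin d2) (Fin d2) ℂ)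
        + (1 : Matrix (Fin d1) (Fin d1) ℂ) ⊗ₖ H2) ρ = 0 := by
  set ρA : Matrix (Fin d1) (Fin d1) ℂ :=
    Matrix.of fun i i' => ∑ k, ρ (i, k) (i', k) with hρA
  set ρB : Matrix (Fin d2) (Fin d2) ℂ :=
    Matrix.of fun k k' => ∑ i, ρ (i, k) (i, k') with hρB
  set K : Matrix (Fin d1 × Fin d2) (Fin d1 × Fin d2) ℂ :=
    H1 ⊗ₖ (1 : Matrix (Fin d2) (Fin d2) ℂ)
      + (1 : Matrix (Fin d1) (Fin d1) ℂ) ⊗ₖ H2 with hK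
  have hKpsd : K.PosSemidef := (kron_one_psd hH1).add (one_kron_psd hH2)
  have hf : ∀ V : Matrix.unitaryGroup (Fin d1 × Fin d2) ℂ,
      0 ≤ (((V : Matrix _ _ ℂ) * ρ * (V : Matrix _ _ ℂ)ᴴ * K).trace).re := fun V =>
    trace_mul_re_nonneg' (hρ.mul_mul_conjTranspose_same _) hKpsd
  have hge : 0 ≤ pe K ρ := le_ciInf hf
  have hbdd : BddBelow (Set.range fun V : Matrix.unitaryGroup (Fin d1 × Fin d2) ℂ =>
      (((V : Matrix _ _ ℂ) * ρ * (V : Matrix _ _ ℂ)ᴴ * K).trace).re) := by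
    refine ⟨0, ?_⟩
    rintro x ⟨V, rfl⟩
    exact hf V
  refine le_antisymm ?_ hge
  by_contra hlt
  push_neg at hlt
  set c := pe K ρ with hc
  have h1 : pe H1 ρA < c / 2 := by rw [hA]; linarith
  have h2 : pe H2 ρB < c / 2 := by rw [hB]; linarith
  unfold pe at h1 h2
  obtain ⟨U1, hU1⟩ := exists_lt_of_ciInf_lt h1
  obtain ⟨U2, hU2⟩ := exists_lt_of_ciInf_lt h2
  have hmem : (U1 : Matrix (Fin d1) (Fin d1) ℂ) ⊗ₖ (U2 : Matrix (Fin d2) (Fin d2) ℂ)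
      ∈ Matrix.unitaryGroup (Fin d1 × Fin d2) ℂ := by
    rw [Matrix.mem_unitaryGroup_iff', Matrix.star_eq_conjTranspose, kron_conjTranspose,
      ← Matrix.mul_kronecker_mul, ← Matrix.star_eq_conjTranspose,
      ← Matrix.star_eq_conjTranspose, Matrix.UnitaryGroup.star_mul_self,
      Matrix.UnitaryGroup.star_mul_self, Matrix.one_kronecker_one]
  set M : Matrix (Fin d1 × Fin d2) (Fin d1 × Fin d2) ℂ :=
    (U1 : Matrix (Fin d1) (Fin d1) ℂ) ⊗ₖ (U2 : Matrix (Fin d2) (Fin d2) ℂ) with hM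
  have e1 : ((U1 : Matrix (Fin d1) (Fin d1) ℂ) ⊗ₖ (U2 : Matrix (Fin d2) (Fin d2) ℂ))ᴴ
        * (H1 ⊗ₖ (1 : Matrix (Fin d2) (Fin d2) ℂ))
        * ((U1 : Matrix (Fin d1) (Fin d1) ℂ) ⊗ₖ (U2 : Matrix (Fin d2) (Fin d2) ℂ))
      = ((U1 : Matrix (Fin d1) (Fin d1) ℂ)ᴴ * H1 * (U1 : Matrix (Fin d1) (Fin d1) ℂ))
          ⊗ₖ (1 : Matrix (Fin d2) (Fin d2) ℂ) := by
    rw [kron_conjTranspose, ← Matrix.mul_kronecker_mul, ← Matrix.mul_kronecker_mul,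
      Matrix.mul_one, ← Matrix.star_eq_conjTranspose (U2 : Matrix (Fin d2) (Fin d2) ℂ),
      Matrix.UnitaryGroup.star_mul_self]
  have e2 : ((U1 : Matrix (Fin d1) (Fin d1) ℂ) ⊗ₖ (U2 : Matrix (Fin d2) (Fin d2) ℂ))ᴴ
        * ((1 : Matrix (Fin d1) (Fin d1) ℂ) ⊗ₖ H2)
        * ((U1 : Matrix (Fin d1) (Fin d1) ℂ) ⊗ₖ (U2 : Matrix (Fin d2) (Fin d2) ℂ))
      = (1 : Matrix (Fin d1) (Fin d1) ℂ)
          ⊗ₖ ((U2 : Matrix (Fin d2) (Fin d2) ℂ)ᴴ * H2 * (U2 : Matrix (Fin d2) (Fin d2) ℂ)) := by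
    rw [kron_conjTranspose, ← Matrix.mul_kronecker_mul, ← Matrix.mul_kronecker_mul,
      Matrix.mul_one, ← Matrix.star_eq_conjTranspose (U1 : Matrix (Fin d1) (Fin d1) ℂ),
      Matrix.UnitaryGroup.star_mul_self]
  have key : (M * ρ * Mᴴ * K).trace
      = ((U1 : Matrix (Fin d1) (Fin d1) ℂ) * ρA * (U1 : Matrix (Fin d1) (Fin d1) ℂ)ᴴ * H1).trace
        + ((U2 : Matrix (Fin d2) (Fin d2) ℂ) * ρB * (U2 : Matrix (Fin d2) (Fin d2) ℂ)ᴴ * H2).trace := by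
    rw [traceConjAux, hM, hK]
    simp only [Matrix.mul_add, Matrix.add_mul, Matrix.trace_add]
    rw [e1, e2, trace_mul_kron_one, trace_mul_one_kron, ← traceConjAux, ← traceConjAux]
  have hcle : c ≤ ((M * ρ * Mᴴ * K).trace).re := ciInf_le hbdd ⟨M, hmem⟩
  rw [key, Complex.add_re] at hcle
  linarith
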